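/- arXiv:2510.18793 — 4 statements merged into one kernel-verified Lean document; each statement's English description precedes it below -/
import Mathlib

section
/- Let β ∈ [0,1), μ = 1−β, and define g : (0,1] → ℝ by g(x) = exp(−∫ₓ¹ μ/(t − tanh(βt)) dt). Then the limit of g(x)/x as x → 0⁺ exists and equals e^{−c(β)}, where c(β) = −∫₀¹ ((βt − tanh(βt))/t²)/(1 − tanh(βt)/t) dt. -/
open Real MeasureTheory intervalIntegral Set Filter Topology

lemma hasDerivAt_aux (x : ℝ) : HasDerivAt (fun s => s * Real.cosh s - Real.sinh s)
    (x * Real.sinh x) x := by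
  have h1 := ((hasDerivAt_id x).mul (Real.hasDerivAt_cosh x)).sub (Real.hasDerivAt_sinh x)
  exact h1.congr_deriv (by simp only [id_eq]; ring)

lemma sinh_le_mul_cosh {s : ℝ} (hs : 0 ≤ s) : Real.sinh s ≤ s * Real.cosh s := by
  have key : MonotoneOn (fun s => s * Real.cosh s - Real.sinh s) (Set.Ici (0:ℝ)) := by
    apply monotoneOn_of_deriv_nonneg (convex_Ici 0) (Continuous.continuousOn (by continuity))
    · intro x _
      exact (hasDerivAt_aux x).differentiableAt.differentiableWithinAt
    · intro x hx
      rw [interior_Ici] at hx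
      rw [(hasDerivAt_aux x).deriv]
      exact mul_nonneg hx.le (Real.sinh_nonneg_iff.mpr hx.le)
  have := key (Set.mem_Ici.mpr (le_refl 0)) (Set.mem_Ici.mpr hs) hs
  simp at this
  linarith

lemma tanh_le_self {s : ℝ} (hs : 0 ≤ s) : Real.tanh s ≤ s := by
  rw [Real.tanh_eq_sinh_div_cosh, div_le_iff₀ (Real.cosh_pos s)]
  exact sinh_le_mul_cosh hs

lemma sub_tanh_le_cube {s : ℝ} (hs : 0 ≤ s) (hs1 : s ≤ 1) :
    s - Real.tanh s ≤ Real.cosh 1 * s ^ 3 := by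
  have h1 : s * Real.cosh s - Real.sinh s ≤ Real.cosh 1 * s ^ 3 := by
    have key : MonotoneOn (fun s => Real.cosh 1 * s ^ 3 - (s * Real.cosh s - Real.sinh s))
        (Set.Icc (0:ℝ) 1) := by
      apply monotoneOn_of_deriv_nonneg (convex_Icc 0 1)
        (Continuous.continuousOn (by continuity))
      · intro x _
        apply DifferentiableAt.differentiableWithinAt
        exact (((differentiable_pow 3).const_mul _).sub
          ((differentiable_id.mul Real.differentiable_cosh).sub Real.differentiable_sinh)).differentiableAt
      · intro x hx
        rw [interior_Icc] at hx
        have hd : HasDerivAt (fun s => Real.cosh 1 * s ^ 3 - (s * Real.cosh s - Real.sinh s))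
          (Real.cosh 1 * (3 * x ^ 2) - x * Real.sinh x) x := by
          have := ((hasDerivAt_pow 3 x).const_mul (Real.cosh 1)).sub (hasDerivAt_aux x)
          exact this.congr_deriv (by norm_num)
        rw [hd.deriv]
        have h2 : Real.sinh x ≤ x * Real.cosh x := sinh_le_mul_cosh hx.1.le
        have h3 : Real.cosh x ≤ Real.cosh 1 := by
          rw [Real.cosh_le_cosh]
          rw [abs_of_nonneg hx.1.le, abs_one]
          exact hx.2.le
        nlinarith [hx.1.le, Real.cosh_pos x]
    have := key (Set.mem_Icc.mpr ⟨le_refl 0, zero_le_one⟩) (Set.mem_Icc.mpr ⟨hs, hs1⟩) hs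
    simp at this
    linarith
  have h4 : s - Real.tanh s = (s * Real.cosh s - Real.sinh s) / Real.cosh s := by
    rw [Real.tanh_eq_sinh_div_cosh]
    field_simp
  rw [h4]
  calc (s * Real.cosh s - Real.sinh s) / Real.cosh s ≤ s * Real.cosh s - Real.sinh s := by
        apply div_le_self _ (Real.one_le_cosh s)
        nlinarith [sinh_le_mul_cosh hs, Real.cosh_pos s]
    _ ≤ Real.cosh 1 * s ^ 3 := h1

noncomputable def hAux (β : ℝ) (t : ℝ) : ℝ :=
  (Real.tanh (β * t) - β * t) / (t * (t - Real.tanh (β * t)))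

/-- The constant `c(β)`. -/
noncomputable def cBeta (β : ℝ) : ℝ :=
  -∫ t in (0 : ℝ)..1,
    ((β * t - Real.tanh (β * t)) / t ^ 2) / (1 - Real.tanh (β * t) / t)

theorem cw_g_over_x_limit (β : ℝ) (hβ : β ∈ Set.Ico (0 : ℝ) 1)
    (g : ℝ → ℝ)
    (hg : ∀ x ∈ Set.Ioc (0 : ℝ) 1,
      g x = Real.exp (-∫ t in x..1, (1 - β) / (t - Real.tanh (β * t)))) :
    Filter.Tendsto (fun x => g x / x) (nhdsWithin 0 (Set.Ioi 0))
      (nhds (Real.exp (-cBeta β))) := by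
  obtain ⟨hβ0, hβ1⟩ := hβ
  set C : ℝ := Real.cosh 1 / (1 - β) with hC
  -- denominator facts
  have hden : ∀ t : ℝ, 0 < t → (1 - β) * t ≤ t - Real.tanh (β * t) := by
    intro t ht
    have h1 : Real.tanh (β * t) ≤ β * t := tanh_le_self (mul_nonneg hβ0 ht.le)
    nlinarith
  have hdenpos : ∀ t : ℝ, 0 < t → 0 < t - Real.tanh (β * t) := by
    intro t ht
    have := hden t ht
    nlinarith
  -- bound for hAux
  have hbound : ∀ t ∈ Set.Ioc (0:ℝ) 1, |hAux β t| ≤ C := by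
    intro t ht
    obtain ⟨ht0, ht1⟩ := ht
    have hbt0 : 0 ≤ β * t := mul_nonneg hβ0 ht0.le
    have hbt1 : β * t ≤ 1 := by nlinarith
    have hcube : β * t - Real.tanh (β * t) ≤ Real.cosh 1 * (β * t) ^ 3 :=
      sub_tanh_le_cube hbt0 hbt1
    have htanle : Real.tanh (β * t) ≤ β * t := tanh_le_self hbt0
    have hD := hdenpos t ht0
    have hcosh1 : (1:ℝ) ≤ Real.cosh 1 := Real.one_le_cosh 1
    have hnum : Real.tanh (β * t) - β * t ≥ -(Real.cosh 1 * t ^ 2) ∧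
        Real.tanh (β * t) - β * t ≤ Real.cosh 1 * t ^ 2 := by
      have ha : β * t ≤ t := by nlinarith
      have hb : (β * t) ^ 3 ≤ t ^ 3 := pow_le_pow_left₀ hbt0 ha 3
      have hcb : t ^ 3 ≤ t ^ 2 := by nlinarith [sq_nonneg t]
      constructor <;> nlinarith
    have hnum' : |Real.tanh (β * t) - β * t| ≤ Real.cosh 1 * t ^ 2 :=
      abs_le.mpr ⟨hnum.1, hnum.2⟩
    have hdpos : 0 < (1 - β) * t ^ 2 := mul_pos (by linarith) (pow_pos ht0 2)
    have hdle : (1 - β) * t ^ 2 ≤ t * (t - Real.tanh (β * t)) := by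
      have := hden t ht0
      nlinarith
    have : |hAux β t| ≤ (Real.cosh 1 * t ^ 2) / ((1 - β) * t ^ 2) := by
      rw [hAux, abs_div]
      have habs : |t * (t - Real.tanh (β * t))| = t * (t - Real.tanh (β * t)) :=
        abs_of_pos (mul_pos ht0 hD)
      rw [habs]
      exact div_le_div₀ (by positivity) hnum' hdpos hdle
    calc |hAux β t| ≤ (Real.cosh 1 * t ^ 2) / ((1 - β) * t ^ 2) := this
      _ = C := by
          rw [hC, mul_comm (Real.cosh 1), mul_comm (1 - β),
            mul_div_mul_left _ _ (by positivity : (t:ℝ) ^ 2 ≠ 0)]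
  -- measurability and integrability of hAux on [0,1]
  have htanh_cont : Continuous Real.tanh := by
    have he : Real.tanh = fun x => Real.sinh x / Real.cosh x :=
      funext fun x => Real.tanh_eq_sinh_div_cosh x
    rw [he]
    exact Real.continuous_sinh.div Real.continuous_cosh fun x => (Real.cosh_pos x).ne'
  have hmeas : Measurable (hAux β) := by
    unfold hAux
    apply Measurable.div
    · exact ((htanh_cont.comp (continuous_const.mul continuous_id)).measurable).sub
        (measurable_const.mul measurable_id)
    · exact measurable_id.mul (measurable_id.sub
        ((htanh_cont.comp (continuous_const.mul continuous_id)).measurable))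
  have hI : IntervalIntegrable (hAux β) volume 0 1 := by
    rw [intervalIntegrable_iff_integrableOn_Ioc_of_le zero_le_one]
    apply Measure.integrableOn_of_bounded (M := C) measure_Ioc_lt_top.ne
      hmeas.aestronglyMeasurable
    exact (ae_restrict_iff' measurableSet_Ioc).mpr (ae_of_all _ fun t ht => by
      simpa using hbound t ht)
  -- pointwise identity
  have hid : ∀ t : ℝ, 0 < t →
      (1 - β) / (t - Real.tanh (β * t)) = 1 / t + hAux β t := by
    intro t ht
    have hD := (hdenpos t ht).ne'
    rw [hAux]
    field_simp
    ring
  -- split of the integral for x ∈ (0,1]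
  have key : ∀ x ∈ Set.Ioc (0:ℝ) 1,
      g x / x = Real.exp (-(∫ t in x..1, hAux β t)) := by
    intro x hx
    obtain ⟨hx0, hx1⟩ := hx
    have hsub : Set.uIcc x 1 ⊆ Set.uIcc (0:ℝ) 1 := by
      rw [Set.uIcc_of_le hx1, Set.uIcc_of_le zero_le_one]
      exact Set.Icc_subset_Icc hx0.le le_rfl
    have hIone : IntervalIntegrable (fun t => 1 / t) volume x 1 := by
      apply ContinuousOn.intervalIntegrable
      apply ContinuousOn.div continuousOn_const continuousOn_id
      intro t ht
      rw [Set.uIcc_of_le hx1] at ht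
      exact (lt_of_lt_of_le hx0 ht.1).ne'
    have hIh : IntervalIntegrable (hAux β) volume x 1 := hI.mono_set hsub
    have hsplit : (∫ t in x..1, (1 - β) / (t - Real.tanh (β * t)))
        = (∫ t in x..1, 1 / t) + ∫ t in x..1, hAux β t := by
      rw [← intervalIntegral.integral_add hIone hIh]
      apply intervalIntegral.integral_congr
      intro t ht
      rw [Set.uIcc_of_le hx1] at ht
      exact hid t (lt_of_lt_of_le hx0 ht.1)
    have hlog : (∫ t in x..1, 1 / t) = - Real.log x := by
      rw [integral_one_div]
      · rw [one_div, Real.log_inv]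
      · rw [Set.uIcc_of_le hx1]
        intro h
        exact absurd h.1 (not_le.mpr hx0)
    rw [hg x ⟨hx0, hx1⟩, hsplit, hlog]
    have : -(-Real.log x + ∫ t in x..1, hAux β t)
        = Real.log x + -(∫ t in x..1, hAux β t) := by ring
    rw [this, Real.exp_add, Real.exp_log hx0]
    field_simp
  -- cBeta equals the integral of hAux
  have hc : cBeta β = ∫ t in (0:ℝ)..1, hAux β t := by
    rw [cBeta]
    have : (∫ t in (0:ℝ)..1,
        ((β * t - Real.tanh (β * t)) / t ^ 2) / (1 - Real.tanh (β * t) / t))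
        = ∫ t in (0:ℝ)..1, -hAux β t := by
      apply intervalIntegral.integral_congr
      intro t ht
      rw [Set.uIcc_of_le zero_le_one] at ht
      simp only
      rcases eq_or_lt_of_le ht.1 with h0 | h0
      · simp [hAux, ← h0]
      · have ht0 : t ≠ 0 := h0.ne'
        have hD : t - Real.tanh (β * t) ≠ 0 := (hdenpos t h0).ne'
        have hone : 1 - Real.tanh (β * t) / t ≠ 0 := by
          have : 1 - Real.tanh (β * t) / t = (t - Real.tanh (β * t)) / t := by field_simp
          rw [this]
          exact div_ne_zero hD ht0
        rw [hAux]
        field_simp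
        ring
    rw [this, intervalIntegral.integral_neg, neg_neg]
  -- the limit of the truncated integral
  have hzero : Tendsto (fun x => ∫ t in (0:ℝ)..x, hAux β t)
      (nhdsWithin 0 (Set.Ioi 0)) (nhds 0) := by
    apply squeeze_zero_norm' (a := fun x => C * x)
    · filter_upwards [Ioc_mem_nhdsGT_of_mem (Set.left_mem_Ico.mpr zero_lt_one)] with x hx
      have : ∀ t ∈ Set.uIoc (0:ℝ) x, ‖hAux β t‖ ≤ C := by
        intro t ht
        rw [Set.uIoc_of_le hx.1.le] at ht
        exact hbound t ⟨ht.1, le_trans ht.2 hx.2⟩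
      calc ‖∫ t in (0:ℝ)..x, hAux β t‖ ≤ C * |x - 0| :=
            intervalIntegral.norm_integral_le_of_norm_le_const this
        _ = C * x := by rw [sub_zero, abs_of_pos hx.1]
    · have : Tendsto (fun x : ℝ => C * x) (nhds 0) (nhds (C * 0)) :=
        (continuous_const.mul continuous_id).tendsto 0
      simpa using this.mono_left nhdsWithin_le_nhds
  have hlim : Tendsto (fun x => ∫ t in x..1, hAux β t)
      (nhdsWithin 0 (Set.Ioi 0)) (nhds (∫ t in (0:ℝ)..1, hAux β t)) := by
    have heq : ∀ x ∈ Set.Ioc (0:ℝ) 1,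
        (∫ t in x..1, hAux β t)
          = (∫ t in (0:ℝ)..1, hAux β t) - ∫ t in (0:ℝ)..x, hAux β t := by
      intro x hx
      have hsub1 : Set.uIcc (0:ℝ) x ⊆ Set.uIcc (0:ℝ) 1 := by
        rw [Set.uIcc_of_le hx.1.le, Set.uIcc_of_le zero_le_one]
        exact Set.Icc_subset_Icc le_rfl hx.2
      have hsub2 : Set.uIcc x 1 ⊆ Set.uIcc (0:ℝ) 1 := by
        rw [Set.uIcc_of_le hx.2, Set.uIcc_of_le zero_le_one]
        exact Set.Icc_subset_Icc hx.1.le le_rfl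
      have := intervalIntegral.integral_add_adjacent_intervals
        (hI.mono_set hsub1) (hI.mono_set hsub2)
      linarith
    have h2 : Tendsto (fun x => (∫ t in (0:ℝ)..1, hAux β t) - ∫ t in (0:ℝ)..x, hAux β t)
        (nhdsWithin 0 (Set.Ioi 0)) (nhds (∫ t in (0:ℝ)..1, hAux β t)) := by
      simpa using tendsto_const_nhds.sub hzero
    apply h2.congr'
    filter_upwards [Ioc_mem_nhdsGT_of_mem (Set.left_mem_Ico.mpr zero_lt_one)] with x hx
    exact (heq x hx).symm
  -- conclude
  rw [hc]
  have hfinal : Tendsto (fun x => Real.exp (-(∫ t in x..1, hAux β t)))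
      (nhdsWithin 0 (Set.Ioi 0)) (nhds (Real.exp (-∫ t in (0:ℝ)..1, hAux β t))) :=
    (Real.continuous_exp.tendsto _).comp hlim.neg
  apply hfinal.congr'
  filter_upwards [Ioc_mem_nhdsGT_of_mem (Set.left_mem_Ico.mpr zero_lt_one)] with x hx
  exact (key x hx).symm
end

section
/- Let β ∈ [0,1), μ = 1−β, and let g be the odd function on [−1,1] with g(x) = exp(−∫ₓ¹ μ/(t − tanh(βt)) dt) for x > 0 and g(0) = 0. Then g is differentiable at 0 with g'(0) = e^{−c(β)}. -/
open Real MeasureTheory intervalIntegral Set Filter Topology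

lemma myHasDerivAt_tanh (x : ℝ) : HasDerivAt Real.tanh (1 / Real.cosh x ^ 2) x := by
  have hfun : Real.tanh = fun x => Real.sinh x / Real.cosh x := funext Real.tanh_eq_sinh_div_cosh
  rw [hfun]
  have h := (Real.hasDerivAt_sinh x).div (Real.hasDerivAt_cosh x) (Real.cosh_pos x).ne'
  have e : (Real.cosh x * Real.cosh x - Real.sinh x * Real.sinh x) / Real.cosh x ^ 2
      = 1 / Real.cosh x ^ 2 := by
    congr 1; nlinarith [Real.cosh_sq_sub_sinh_sq x]
  exact e ▸ h

lemma my_continuous_tanh : Continuous Real.tanh := by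
  have hfun : Real.tanh = fun x => Real.sinh x / Real.cosh x := funext Real.tanh_eq_sinh_div_cosh
  rw [hfun]
  exact Real.continuous_sinh.div Real.continuous_cosh fun x => (Real.cosh_pos x).ne'

lemma my_tanh_nonneg {u : ℝ} (hu : 0 ≤ u) : 0 ≤ Real.tanh u := by
  rw [Real.tanh_eq_sinh_div_cosh]
  exact div_nonneg (Real.sinh_nonneg_iff.2 hu) (Real.cosh_pos u).le

lemma my_tanh_le_self {u : ℝ} (hu : 0 ≤ u) : Real.tanh u ≤ u := by
  have hmono : Monotone fun x : ℝ => x * Real.cosh x - Real.sinh x := by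
    apply monotone_of_deriv_nonneg
    · exact (differentiable_id.mul Real.differentiable_cosh).sub Real.differentiable_sinh
    · intro x
      have h1 : HasDerivAt (fun x : ℝ => x * Real.cosh x - Real.sinh x)
          ((1 * Real.cosh x + x * Real.sinh x) - Real.cosh x) x :=
        ((hasDerivAt_id x).mul (Real.hasDerivAt_cosh x)).sub (Real.hasDerivAt_sinh x)
      rw [h1.deriv]
      rcases le_total 0 x with h | h
      · nlinarith [mul_nonneg h (Real.sinh_nonneg_iff.2 h)]
      · nlinarith [Real.sinh_nonpos_iff.2 h]
  have h0 := hmono hu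
  simp only [Real.sinh_zero, Real.cosh_zero, mul_one, zero_mul, sub_zero, zero_sub] at h0
  rw [Real.tanh_eq_sinh_div_cosh, div_le_iff₀ (Real.cosh_pos u)]
  nlinarith [Real.cosh_pos u]

lemma my_abs_tanh_le (u : ℝ) : |Real.tanh u| ≤ |u| := by
  rcases le_total 0 u with h | h
  · rw [abs_of_nonneg (my_tanh_nonneg h), abs_of_nonneg h]; exact my_tanh_le_self h
  · have h' : 0 ≤ -u := by linarith
    have h1 := my_tanh_le_self h'
    have h2 := my_tanh_nonneg h'
    rw [Real.tanh_neg] at h1 h2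
    rw [abs_of_nonpos (by linarith), abs_of_nonpos h]; linarith

lemma my_sub_tanh_le_cube {u : ℝ} (hu : 0 ≤ u) : u - Real.tanh u ≤ u ^ 3 := by
  have hmono : Monotone fun x : ℝ => x ^ 3 - x + Real.tanh x := by
    apply monotone_of_deriv_nonneg
    · exact ((differentiable_id.pow 3).sub differentiable_id).add
        fun y => (myHasDerivAt_tanh y).differentiableAt
    · intro x
      have h1 : HasDerivAt (fun x : ℝ => x ^ 3 - x + Real.tanh x)
          ((3 * x ^ 2 - 1) + 1 / Real.cosh x ^ 2) x := by
        exact (((hasDerivAt_pow 3 x).fun_sub (hasDerivAt_id' x)).fun_add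
          (myHasDerivAt_tanh x)).congr_deriv (by norm_num)
      rw [h1.deriv]
      have hc : (Real.cosh x ^ 2) ≠ 0 := by positivity
      have htanh_sq : Real.tanh x ^ 2 ≤ x ^ 2 := by
        have h := my_abs_tanh_le x
        have := mul_self_le_mul_self (abs_nonneg (Real.tanh x)) h
        simpa [← sq, sq_abs] using this
      have heq : Real.tanh x ^ 2 * Real.cosh x ^ 2 = Real.sinh x ^ 2 := by
        rw [Real.tanh_eq_sinh_div_cosh, div_pow, div_mul_cancel₀ _ hc]
      have hinv : 1 / Real.cosh x ^ 2 = 1 - Real.tanh x ^ 2 := by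
        rw [eq_comm, eq_div_iff hc]
        nlinarith [Real.cosh_sq_sub_sinh_sq x]
      rw [hinv]
      nlinarith
  have h0 := hmono hu
  simp only [Real.tanh_zero] at h0
  norm_num at h0
  linarith

theorem cw_g_deriv_at_zero (β : ℝ) (hβ : β ∈ Set.Ico (0 : ℝ) 1)
    (g : ℝ → ℝ)
    (hodd : ∀ x ∈ Set.Icc (-1 : ℝ) 1, g (-x) = -g x)
    (hg : ∀ x ∈ Set.Ioc (0 : ℝ) 1,
      g x = Real.exp (-∫ t in x..1, (1 - β) / (t - Real.tanh (β * t))))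
    (hg0 : g 0 = 0) :
    HasDerivWithinAt g (Real.exp (-cBeta β)) (Set.Icc (-1 : ℝ) 1) 0 := by
  obtain ⟨hβ0, hβ1⟩ := hβ
  set h : ℝ → ℝ := fun t => ((β * t - Real.tanh (β * t)) / t ^ 2) / (1 - Real.tanh (β * t) / t)
    with hh
  -- basic pointwise facts for t > 0
  have hfacts : ∀ t : ℝ, 0 < t →
      0 ≤ β * t - Real.tanh (β * t) ∧ β * t - Real.tanh (β * t) ≤ β ^ 3 * t ^ 3 ∧
      1 - β ≤ 1 - Real.tanh (β * t) / t ∧ 0 < t - Real.tanh (β * t) := by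
    intro t ht
    have hu : 0 ≤ β * t := by positivity
    have h1 : Real.tanh (β * t) ≤ β * t := my_tanh_le_self hu
    have h2 : β * t - Real.tanh (β * t) ≤ (β * t) ^ 3 := my_sub_tanh_le_cube hu
    have h3 : Real.tanh (β * t) / t ≤ β := by
      rw [div_le_iff₀ ht]; linarith [h1]
    refine ⟨by linarith, by nlinarith, by linarith, ?_⟩
    nlinarith
  have hμ : (0:ℝ) < 1 - β := by linarith
  -- continuity of h on [0,1]
  have tTanh : Continuous fun t : ℝ => Real.tanh (β * t) :=
    my_continuous_tanh.comp (continuous_const.mul continuous_id)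
  have hcont : ContinuousOn h (Icc (0:ℝ) 1) := by
    intro a ha
    rcases eq_or_lt_of_le ha.1 with ha0 | ha0
    · -- a = 0 : squeeze
      have ha0' : a = 0 := ha0.symm
      subst ha0'
      have hval : h 0 = 0 := by simp [hh]
      rw [ContinuousWithinAt, hval]
      apply squeeze_zero' (g := fun t => β ^ 3 * t / (1 - β))
      · filter_upwards [eventually_mem_nhdsWithin] with t ht
        rcases eq_or_lt_of_le ht.1 with h0 | h0
        · simp [hh, ← h0]
        · obtain ⟨f1, f2, f3, f4⟩ := hfacts t h0
          exact div_nonneg (div_nonneg f1 (by positivity)) (by linarith)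
      · filter_upwards [eventually_mem_nhdsWithin] with t ht
        rcases eq_or_lt_of_le ht.1 with h0 | h0
        · simp [hh, ← h0]
        · obtain ⟨f1, f2, f3, f4⟩ := hfacts t h0
          have hnum : (β * t - Real.tanh (β * t)) / t ^ 2 ≤ β ^ 3 * t := by
            rw [div_le_iff₀ (by positivity)]
            calc β * t - Real.tanh (β * t) ≤ β ^ 3 * t ^ 3 := f2
            _ = β ^ 3 * t * t ^ 2 := by ring
          have hnum0 : 0 ≤ (β * t - Real.tanh (β * t)) / t ^ 2 :=
            div_nonneg f1 (by positivity)
          exact div_le_div₀ (by positivity) hnum hμ f3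
      · have : Tendsto (fun t : ℝ => β ^ 3 * t / (1 - β)) (𝓝 0) (𝓝 (β ^ 3 * 0 / (1 - β))) :=
          ((continuous_const.mul continuous_id).div_const _).tendsto 0
        simpa using this.mono_left nhdsWithin_le_nhds
    · -- a > 0 : continuous at a
      obtain ⟨f1, f2, f3, f4⟩ := hfacts a ha0
      have hnum : ContinuousAt (fun t => (β * t - Real.tanh (β * t)) / t ^ 2) a :=
        (((continuous_const.mul continuous_id).sub tTanh).continuousAt).div
          (continuous_pow 2).continuousAt (by positivity)
      have hden : ContinuousAt (fun t => 1 - Real.tanh (β * t) / t) a :=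
        continuousAt_const.sub (tTanh.continuousAt.div continuousAt_id ha0.ne')
      exact ((hnum.div hden (by linarith)).continuousWithinAt)
  -- integrability
  have hIntegr : ∀ x ∈ Icc (0:ℝ) 1, IntervalIntegrable h volume x 1 := by
    intro x hx
    apply ContinuousOn.intervalIntegrable
    rw [uIcc_of_le hx.2]
    exact hcont.mono (Icc_subset_Icc hx.1 le_rfl)
  -- key formula for g on (0,1]
  have hgx : ∀ x ∈ Ioc (0:ℝ) 1, g x = x * Real.exp (∫ t in x..1, h t) := by
    intro x hx
    obtain ⟨hx0, hx1⟩ := hx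
    have hEq : EqOn (fun t => (1 - β) / (t - Real.tanh (β * t))) (fun t => 1 / t - h t)
        (uIcc x 1) := by
      intro t ht
      rw [uIcc_of_le hx1] at ht
      have ht0 : 0 < t := lt_of_lt_of_le hx0 ht.1
      obtain ⟨f1, f2, f3, f4⟩ := hfacts t ht0
      have hd1 : t - Real.tanh (β * t) ≠ 0 := f4.ne'
      have hd2 : (1:ℝ) - Real.tanh (β * t) / t ≠ 0 := by
        have : (0:ℝ) < 1 - Real.tanh (β * t) / t := lt_of_lt_of_le hμ f3
        exact this.ne'
      have hd3 : t ≠ 0 := ht0.ne'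
      simp only [hh]
      field_simp
      ring
    have hInt1 : IntervalIntegrable (fun t => 1 / t) volume x 1 := by
      apply ContinuousOn.intervalIntegrable
      rw [uIcc_of_le hx1]
      exact continuousOn_const.div continuousOn_id
        (fun t ht => (lt_of_lt_of_le hx0 ht.1).ne')
    have e1 : (∫ t in x..1, (1 - β) / (t - Real.tanh (β * t)))
        = (∫ t in x..1, 1 / t) - ∫ t in x..1, h t := by
      rw [intervalIntegral.integral_congr hEq]
      exact intervalIntegral.integral_sub hInt1 (hIntegr x ⟨hx0.le, hx1⟩)
    have e3 : (∫ t in x..1, 1 / t) = -Real.log x := by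
      rw [integral_one_div]
      · rw [one_div, Real.log_inv]
      · intro hc
        rw [uIcc_of_le hx1, mem_Icc] at hc
        linarith [hc.1]
    rw [hg x ⟨hx0, hx1⟩, e1, e3]
    have : -(-Real.log x - ∫ t in x..1, h t) = Real.log x + ∫ t in x..1, h t := by ring
    rw [this, Real.exp_add, Real.exp_log hx0]
  -- continuity of the primitive
  have hIntOn : IntegrableOn h (uIcc (0:ℝ) 1) volume := by
    rw [uIcc_of_le zero_le_one]
    exact hcont.integrableOn_Icc
  have FcontOn : ContinuousOn (fun x => ∫ t in x..1, h t) (Icc (0:ℝ) 1) := by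
    have := intervalIntegral.continuousOn_primitive_interval_left hIntOn
    rwa [uIcc_of_le zero_le_one] at this
  have hF : Tendsto (fun y => ∫ t in y..1, h t) (𝓝[Icc (0:ℝ) 1] 0) (𝓝 (-cBeta β)) := by
    have hcw := FcontOn 0 (left_mem_Icc.2 zero_le_one)
    have hval : (∫ t in (0:ℝ)..1, h t) = -cBeta β := by
      rw [cBeta, neg_neg]
    rw [ContinuousWithinAt, hval] at hcw
    exact hcw
  -- final slope argument
  rw [hasDerivWithinAt_iff_tendsto_slope]
  have key : ∀ x ∈ Icc (-1:ℝ) 1 \ {(0:ℝ)},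
      slope g 0 x = Real.exp (∫ t in |x|..1, h t) := by
    rintro x ⟨hxI, hxne⟩
    have hxne' : x ≠ 0 := hxne
    have hxI' := mem_Icc.1 hxI
    obtain ⟨hxl, hxr⟩ := hxI'
    rw [slope_def_field, hg0, sub_zero, sub_zero]
    rcases hxne'.lt_or_gt with hneg | hpos
    · have hy : -x ∈ Ioc (0:ℝ) 1 := ⟨by linarith, by linarith [hxI.1]⟩
      have hox := hodd (-x) ⟨by linarith [hxI.2], by linarith⟩
      rw [neg_neg] at hox
      rw [hox, hgx (-x) hy, abs_of_neg hneg]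
      field_simp
    · rw [hgx x ⟨hpos, hxr⟩, abs_of_pos hpos, mul_comm, mul_div_assoc,
        div_self hpos.ne', mul_one]
  have heq : (slope g 0) =ᶠ[𝓝[Icc (-1:ℝ) 1 \ {(0:ℝ)}] (0:ℝ)]
      fun x => Real.exp (∫ t in |x|..1, h t) :=
    eventually_mem_nhdsWithin.mono fun x hx => key x hx
  have habs : Tendsto (fun x : ℝ => |x|) (𝓝[Icc (-1:ℝ) 1 \ {(0:ℝ)}] 0)
      (𝓝[Icc (0:ℝ) 1] 0) := by
    rw [tendsto_nhdsWithin_iff]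
    constructor
    · have : Tendsto (fun x : ℝ => |x|) (𝓝 0) (𝓝 |(0:ℝ)|) := continuous_abs.tendsto 0
      simpa using this.mono_left nhdsWithin_le_nhds
    · filter_upwards [eventually_mem_nhdsWithin] with x hx
      exact ⟨abs_nonneg x, abs_le.2 ⟨(mem_Icc.1 hx.1).1, (mem_Icc.1 hx.1).2⟩⟩
  exact Tendsto.congr' heq.symm ((Real.continuous_exp.tendsto _).comp (hF.comp habs))
end

section
/- Let β ∈ [0,1), μ = 1−β, and g as above on (0,1]. Then for x ∈ (0,1), g''(x) = (−β(1−β)·g(x)/(x − tanh(βx))²)·(1 − 1/cosh(βx)²), and g''(x) → 0 as x → 0⁺. Consequently g'' is bounded on (0,1]. -/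
open Real MeasureTheory intervalIntegral Set Filter Topology

/-- The odd function `g` from the Curie–Weiss analysis:
for `x > 0`, `g x = exp (-∫ₓ¹ (1-β)/(t - tanh (βt)) dt)`, extended oddly. -/
noncomputable def cwG (β x : ℝ) : ℝ :=
  Real.sign x * Real.exp (-(∫ t in |x|..1, (1 - β) / (t - Real.tanh (β * t))))

lemma cw_tanh_le_self {y : ℝ} (hy : 0 ≤ y) : Real.tanh y ≤ y := by
  rw [Real.tanh_eq_sinh_div_cosh, div_le_iff₀ (Real.cosh_pos y)]
  have key : ∀ z : ℝ, HasDerivAt (fun y => y * Real.cosh y - Real.sinh y)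
      (z * Real.sinh z) z := by
    intro z
    have h1 := ((hasDerivAt_id z).mul (Real.hasDerivAt_cosh z)).sub (Real.hasDerivAt_sinh z)
    refine h1.congr_deriv ?_
    simp [id]
  have mono : MonotoneOn (fun y => y * Real.cosh y - Real.sinh y) (Set.Ici 0) := by
    apply monotoneOn_of_deriv_nonneg (convex_Ici 0)
    · exact ((continuous_id.mul Real.continuous_cosh).sub Real.continuous_sinh).continuousOn
    · intro z _
      exact (key z).differentiableAt.differentiableWithinAt
    · intro z hz
      rw [(key z).deriv]
      rw [interior_Ici] at hz
      exact mul_nonneg (le_of_lt hz) (Real.sinh_nonneg_iff.2 (le_of_lt hz))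
  have h := mono Set.self_mem_Ici hy hy
  simpa using h

lemma cw_tanh_nonneg {y : ℝ} (hy : 0 ≤ y) : 0 ≤ Real.tanh y := by
  rw [Real.tanh_eq_sinh_div_cosh]
  exact div_nonneg (Real.sinh_nonneg_iff.2 hy) (Real.cosh_pos y).le

lemma cw_hasDerivAt_tanh (y : ℝ) : HasDerivAt Real.tanh (1 / Real.cosh y ^ 2) y := by
  have h := (Real.hasDerivAt_sinh y).div (Real.hasDerivAt_cosh y) (Real.cosh_pos y).ne'
  have he : (Real.sinh / Real.cosh) = Real.tanh :=
    funext fun x => (Real.tanh_eq_sinh_div_cosh x).symm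
  rw [he] at h
  refine h.congr_deriv ?_
  have hc := Real.cosh_sq y
  field_simp
  nlinarith [hc]

theorem cw_g_second_deriv (β : ℝ) (hβ : β ∈ Set.Ico (0 : ℝ) 1) :
    (∀ x ∈ Set.Ioo (0 : ℝ) 1,
      deriv (deriv (cwG β)) x =
        (-β * (1 - β) * cwG β x / (x - Real.tanh (β * x)) ^ 2) *
          (1 - 1 / (Real.cosh (β * x)) ^ 2)) ∧
    Filter.Tendsto (fun x => deriv (deriv (cwG β)) x) (nhdsWithin 0 (Set.Ioi 0))
      (nhds 0) ∧
    ∃ M : ℝ, ∀ x ∈ Set.Ioc (0 : ℝ) 1, |deriv (deriv (cwG β)) x| ≤ M := by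
  obtain ⟨hβ0, hβ1⟩ := hβ
  have hμ : (0:ℝ) < 1 - β := by linarith
  set f : ℝ → ℝ := fun t => (1 - β) / (t - Real.tanh (β * t)) with hf_def
  -- denominator facts
  have hden_lb : ∀ x ∈ Set.Ioi (0:ℝ), (1 - β) * x ≤ x - Real.tanh (β * x) := by
    intro x hx
    have h1 : Real.tanh (β * x) ≤ β * x :=
      cw_tanh_le_self (mul_nonneg hβ0 (le_of_lt hx))
    nlinarith
  have hden_ub : ∀ x ∈ Set.Ioi (0:ℝ), x - Real.tanh (β * x) ≤ x := by
    intro x hx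
    have := cw_tanh_nonneg (mul_nonneg hβ0 (le_of_lt hx))
    linarith
  have hden_pos : ∀ x ∈ Set.Ioi (0:ℝ), 0 < x - Real.tanh (β * x) := by
    intro x hx
    have := hden_lb x hx
    nlinarith [Set.mem_Ioi.1 hx]
  have hcont_tanh : Continuous Real.tanh := by
    have : Real.tanh = fun x => Real.sinh x / Real.cosh x :=
      funext fun x => Real.tanh_eq_sinh_div_cosh x
    rw [this]
    exact Real.continuous_sinh.div Real.continuous_cosh fun x => (Real.cosh_pos x).ne'
  have hcont_den : Continuous (fun t : ℝ => t - Real.tanh (β * t)) :=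
    continuous_id.sub (hcont_tanh.comp (continuous_const.mul continuous_id))
  have hcont : ContinuousOn f (Set.Ioi 0) := by
    apply ContinuousOn.div continuousOn_const hcont_den.continuousOn
    intro x hx
    exact (hden_pos x hx).ne'
  set G : ℝ → ℝ := fun x => ∫ t in x..1, f t with hG_def
  set g : ℝ → ℝ := fun x => Real.exp (-(G x)) with hg_def
  have hEq : ∀ x ∈ Set.Ioi (0:ℝ), cwG β x = g x := by
    intro x hx
    simp only [cwG, hg_def, hG_def, hf_def, Real.sign_of_pos (Set.mem_Ioi.1 hx),
      abs_of_pos (Set.mem_Ioi.1 hx), one_mul]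
  have hint : ∀ x ∈ Set.Ioi (0:ℝ), IntervalIntegrable f volume x 1 := by
    intro x hx
    apply ContinuousOn.intervalIntegrable
    apply hcont.mono
    intro t ht
    exact lt_of_lt_of_le (lt_min (Set.mem_Ioi.1 hx) one_pos) ht.1
  have hGderiv : ∀ x ∈ Set.Ioi (0:ℝ), HasDerivAt G (-(f x)) x := by
    intro x hx
    exact intervalIntegral.integral_hasDerivAt_left (hint x hx)
      (hcont.stronglyMeasurableAtFilter isOpen_Ioi x hx)
      (hcont.continuousAt (isOpen_Ioi.mem_nhds hx))
  have hgderiv : ∀ x ∈ Set.Ioi (0:ℝ), HasDerivAt g (g x * f x) x := by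
    intro x hx
    have h := ((hGderiv x hx).neg).exp
    simpa using h
  have hcwderiv : ∀ x ∈ Set.Ioi (0:ℝ), HasDerivAt (cwG β) (g x * f x) x := by
    intro x hx
    apply (hgderiv x hx).congr_of_eventuallyEq
    filter_upwards [isOpen_Ioi.mem_nhds hx] with y hy using hEq y hy
  have hderiv_eq : ∀ x ∈ Set.Ioi (0:ℝ), deriv (cwG β) x = g x * f x :=
    fun x hx => (hcwderiv x hx).deriv
  -- derivative of the denominator
  have hdd : ∀ x : ℝ, HasDerivAt (fun t : ℝ => t - Real.tanh (β * t))
      (1 - β * (1 / Real.cosh (β * x) ^ 2)) x := by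
    intro x
    have hb : HasDerivAt (fun t : ℝ => β * t) β x := by
      simpa using (hasDerivAt_id x).const_mul β
    have h := (cw_hasDerivAt_tanh (β * x)).comp x hb
    have := (hasDerivAt_id x).sub h
    refine this.congr_deriv ?_
    ring
  have hfderiv : ∀ x ∈ Set.Ioi (0:ℝ), HasDerivAt f
      (-((1 - β) * (1 - β * (1 / Real.cosh (β * x) ^ 2)) /
        (x - Real.tanh (β * x)) ^ 2)) x := by
    intro x hx
    have h := (hasDerivAt_const x (1 - β)).div (hdd x) (hden_pos x hx).ne'
    refine h.congr_deriv ?_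
    field_simp
    ring
  -- second derivative formula on Ioi 0
  have hsecond : ∀ x ∈ Set.Ioi (0:ℝ), deriv (deriv (cwG β)) x =
      (-β * (1 - β) * cwG β x / (x - Real.tanh (β * x)) ^ 2) *
        (1 - 1 / (Real.cosh (β * x)) ^ 2) := by
    intro x hx
    have hh : HasDerivAt (fun y => g y * f y)
        (g x * f x * f x + g x * (-((1 - β) * (1 - β * (1 / Real.cosh (β * x) ^ 2)) /
          (x - Real.tanh (β * x)) ^ 2))) x := (hgderiv x hx).mul (hfderiv x hx)
    have heq2 : deriv (cwG β) =ᶠ[nhds x] fun y => g y * f y := by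
      filter_upwards [isOpen_Ioi.mem_nhds hx] with y hy using hderiv_eq y hy
    rw [heq2.deriv_eq, hh.deriv, hEq x hx, hf_def]
    have hd0 : (x - Real.tanh (β * x)) ≠ 0 := (hden_pos x hx).ne'
    have hc0 : Real.cosh (β * x) ≠ 0 := (Real.cosh_pos _).ne'
    field_simp
    ring
  -- lower bound on G via comparison with (1-β)/t
  have hGlb : ∀ x ∈ Set.Ioc (0:ℝ) 1, -((1 - β) * Real.log x) ≤ G x := by
    intro x hx
    obtain ⟨hx0, hx1⟩ := hx
    have hint1 : IntervalIntegrable (fun t : ℝ => (1 - β) * t⁻¹) volume x 1 := by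
      apply ContinuousOn.intervalIntegrable
      apply ContinuousOn.mul continuousOn_const
      apply ContinuousOn.inv₀ continuousOn_id
      intro t ht
      exact (lt_of_lt_of_le (lt_min hx0 one_pos) ht.1).ne'
    have hmono : ∀ t ∈ Set.Icc x 1, (1 - β) * t⁻¹ ≤ f t := by
      intro t ht
      have ht0 : 0 < t := lt_of_lt_of_le hx0 ht.1
      have h1 := hden_pos t ht0
      have h2 := hden_ub t ht0
      have : (1 - β) / t ≤ (1 - β) / (t - Real.tanh (β * t)) := by
        rw [div_le_div_iff₀ ht0 h1]
        nlinarith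
      simpa [hf_def, div_eq_mul_inv] using this
    have hmono_int := intervalIntegral.integral_mono_on hx1 hint1
      (hint x (Set.mem_Ioi.2 hx0)) hmono
    have hval : (∫ t in x..1, (1 - β) * t⁻¹) = -((1 - β) * Real.log x) := by
      rw [intervalIntegral.integral_const_mul, integral_inv ?_]
      · rw [one_div, Real.log_inv]
        ring
      · intro h
        exact absurd h.1 (not_le.2 (lt_min hx0 one_pos))
    rw [hval] at hmono_int
    exact hmono_int
  have hgle : ∀ x ∈ Set.Ioc (0:ℝ) 1, g x ≤ Real.exp ((1 - β) * Real.log x) := by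
    intro x hx
    simp only [hg_def]
    apply Real.exp_le_exp.2
    have := hGlb x hx
    linarith
  have hone_sub_c : ∀ y : ℝ, 1 - 1 / Real.cosh y ^ 2 = Real.tanh y ^ 2 := by
    intro y
    have hcq := Real.cosh_sq y
    have h0 : Real.cosh y ≠ 0 := (Real.cosh_pos y).ne'
    rw [Real.tanh_eq_sinh_div_cosh, div_pow]
    field_simp
    nlinarith [hcq]
  have hbound : ∀ x ∈ Set.Ioc (0:ℝ) 1, |deriv (deriv (cwG β)) x| ≤
      β ^ 3 / (1 - β) * Real.exp ((1 - β) * Real.log x) := by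
    intro x hx
    obtain ⟨hx0, hx1⟩ := hx
    have hxI : x ∈ Set.Ioi (0:ℝ) := Set.mem_Ioi.2 hx0
    rw [hsecond x hxI, hEq x hxI, hone_sub_c (β * x)]
    have hd := hden_pos x hxI
    have hdl := hden_lb x hxI
    have hgpos : 0 < g x := Real.exp_pos _
    have ht1 : 0 ≤ Real.tanh (β * x) := cw_tanh_nonneg (mul_nonneg hβ0 hx0.le)
    have ht2 : Real.tanh (β * x) ≤ β * x := cw_tanh_le_self (mul_nonneg hβ0 hx0.le)
    have hg' := hgle x ⟨hx0, hx1⟩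
    have hE : (-β * (1 - β) * g x / (x - Real.tanh (β * x)) ^ 2) *
        Real.tanh (β * x) ^ 2 ≤ 0 := by
      apply mul_nonpos_of_nonpos_of_nonneg
      · apply div_nonpos_of_nonpos_of_nonneg
        · nlinarith [mul_nonneg (mul_nonneg hβ0 hμ.le) hgpos.le]
        · positivity
      · positivity
    rw [abs_of_nonpos hE]
    have htsq : Real.tanh (β * x) ^ 2 ≤ (β * x) ^ 2 := by nlinarith
    calc -(-β * (1 - β) * g x / (x - Real.tanh (β * x)) ^ 2 * Real.tanh (β * x) ^ 2)
        = β * (1 - β) * g x * Real.tanh (β * x) ^ 2 / (x - Real.tanh (β * x)) ^ 2 := by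
          ring
      _ ≤ β * (1 - β) * Real.exp ((1 - β) * Real.log x) * (β * x) ^ 2 /
          ((1 - β) * x) ^ 2 := by
          apply div_le_div₀ (by positivity) ?_ (by positivity) (by nlinarith)
          have h1 : g x * Real.tanh (β * x) ^ 2 ≤
              Real.exp ((1 - β) * Real.log x) * (β * x) ^ 2 :=
            mul_le_mul hg' htsq (by positivity) (Real.exp_pos _).le
          nlinarith [mul_nonneg hβ0 hμ.le]
      _ = β ^ 3 / (1 - β) * Real.exp ((1 - β) * Real.log x) := by
          field_simp
  refine ⟨fun x hx => hsecond x (Set.mem_Ioi.2 hx.1), ?_, ?_⟩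
  · apply squeeze_zero_norm'
      (a := fun x => β ^ 3 / (1 - β) * Real.exp ((1 - β) * Real.log x))
    · filter_upwards [Ioc_mem_nhdsGT one_pos] with x hx
      simpa [Real.norm_eq_abs] using hbound x hx
    · have hlog : Tendsto (fun x : ℝ => (1 - β) * Real.log x) (𝓝[>] (0:ℝ)) atBot :=
        Real.tendsto_log_nhdsGT_zero.const_mul_atBot hμ
      have hexp : Tendsto (fun x : ℝ => Real.exp ((1 - β) * Real.log x))
          (𝓝[>] (0:ℝ)) (𝓝 0) := Real.tendsto_exp_atBot.comp hlog
      simpa using hexp.const_mul (β ^ 3 / (1 - β))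
  · refine ⟨β ^ 3 / (1 - β), fun x hx => ?_⟩
    have h := hbound x hx
    have he1 : Real.exp ((1 - β) * Real.log x) ≤ 1 := by
      rw [Real.exp_le_one_iff]
      have := Real.log_nonpos hx.1.le hx.2
      nlinarith
    have hC : (0:ℝ) ≤ β ^ 3 / (1 - β) := by positivity
    calc |deriv (deriv (cwG β)) x| ≤ β ^ 3 / (1 - β) * Real.exp ((1 - β) * Real.log x) := h
      _ ≤ β ^ 3 / (1 - β) * 1 := mul_le_mul_of_nonneg_left he1 hC
      _ = β ^ 3 / (1 - β) := mul_one _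
end

section
/- For one-dimensional Gaussians with common positive variance σ² > 0 and means m₁, m₂, the total variation distance satisfies ‖N(m₁,σ²) − N(m₂,σ²)‖_TV = 2Φ(|m₁−m₂|/(2σ)) − 1, and consequently ‖N(m₁,σ²) − N(m₂,σ²)‖_TV ≤ |m₁−m₂|/(σ√(2π)). -/
open MeasureTheory ProbabilityTheory

/-- Standard normal CDF. -/
noncomputable def stdNormalCDF (x : ℝ) : ℝ :=
  ((gaussianReal 0 1) (Set.Iic x)).toReal

/-- Total variation distance between two measures on `ℝ`. -/
noncomputable def tvDist (P Q : Measure ℝ) : ℝ :=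
  ⨆ s : {s : Set ℝ // MeasurableSet s}, |(P s).toReal - (Q s).toReal|

open Set

lemma toNNReal_sq_eq (σ : ℝ) :
    (⟨σ^2, sq_nonneg _⟩ : NNReal) * 1 = Real.toNNReal (σ ^ 2) := by
  ext
  simp [Real.toNNReal, max_eq_left (sq_nonneg σ)]

lemma gaussian_map (m σ : ℝ) (hσ : 0 < σ) :
    (gaussianReal 0 1).map (fun y => σ * y + m) = gaussianReal m (Real.toNNReal (σ ^ 2)) := by
  have h1 : (fun y => σ * y + m) = (fun y => y + m) ∘ (fun y => σ * y) := rfl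
  rw [h1, ← Measure.map_map (by fun_prop) (by fun_prop),
    gaussianReal_map_const_mul σ, mul_zero, gaussianReal_map_add_const m,
    zero_add]
  congr 1
  ext
  simp [max_eq_left (sq_nonneg σ)]

lemma gaussian_Iic (m σ : ℝ) (hσ : 0 < σ) (x : ℝ) :
    gaussianReal m (Real.toNNReal (σ ^ 2)) (Set.Iic x)
      = gaussianReal 0 1 (Set.Iic ((x - m) / σ)) := by
  rw [← gaussian_map m σ hσ, Measure.map_apply (by fun_prop) measurableSet_Iic]
  congr 1
  ext y
  simp only [mem_preimage, mem_Iic, le_div_iff₀ hσ]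
  constructor <;> intro h <;> nlinarith

lemma gaussian_singleton (m : ℝ) {v : NNReal} (hv : v ≠ 0) (x : ℝ) :
    gaussianReal m v {x} = 0 :=
  gaussianReal_absolutelyContinuous m hv (measure_singleton x)

lemma stdNormal_neg (x : ℝ) :
    gaussianReal 0 1 (Set.Iic (-x)) = gaussianReal 0 1 (Set.Ici x) := by
  have hmap : (gaussianReal 0 1).map (fun y => (-1 : ℝ) * y) = gaussianReal 0 1 := by
    rw [gaussianReal_map_const_mul (-1 : ℝ)]
    norm_num
  conv_lhs => rw [← hmap]
  rw [Measure.map_apply (by fun_prop) measurableSet_Iic]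
  congr 1
  ext y
  simp only [Set.mem_preimage, Set.mem_Iic, Set.mem_Ici]
  constructor <;> intro h <;> linarith

lemma stdNormal_Ici (x : ℝ) :
    gaussianReal 0 1 (Set.Ici x) = 1 - gaussianReal 0 1 (Set.Iic x) := by
  have h1 : gaussianReal 0 1 (Set.Iic x) + gaussianReal 0 1 (Set.Ioi x) = 1 := by
    rw [← measure_union (Set.Iic_disjoint_Ioi le_rfl) measurableSet_Ioi, Set.Iic_union_Ioi,
      measure_univ]
  have h2 : gaussianReal 0 1 (Set.Ici x) = gaussianReal 0 1 (Set.Ioi x) := by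
    refine le_antisymm ?_ (measure_mono Set.Ioi_subset_Ici_self)
    calc gaussianReal 0 1 (Set.Ici x) ≤ gaussianReal 0 1 (Set.Ioi x) + gaussianReal 0 1 {x} := by
          rw [← Set.Ioi_union_left]; exact measure_union_le _ _
      _ = gaussianReal 0 1 (Set.Ioi x) := by
          rw [gaussian_singleton 0 one_ne_zero x, add_zero]
  rw [h2]
  exact ENNReal.eq_sub_of_add_eq (measure_ne_top _ _) (by rw [add_comm]; exact h1)

lemma tv_aux {P Q : Measure ℝ} [IsFiniteMeasure P] [IsFiniteMeasure Q]
    {A : Set ℝ} (hA : MeasurableSet A)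
    (h₁ : ∀ s, MeasurableSet s → s ⊆ A → Q s ≤ P s)
    (h₂ : ∀ s, MeasurableSet s → s ⊆ Aᶜ → P s ≤ Q s)
    {s : Set ℝ} (hs : MeasurableSet s) :
    (P s).toReal - (Q s).toReal ≤ (P A).toReal - (Q A).toReal := by
  have fin : ∀ (μ : Measure ℝ) [IsFiniteMeasure μ] (t : Set ℝ), μ t ≠ ⊤ :=
    fun μ _ t => measure_ne_top μ t
  have hPs : (P s).toReal = (P (s ∩ A)).toReal + (P (s \ A)).toReal := by
    rw [← ENNReal.toReal_add (fin P _) (fin P _), measure_inter_add_diff s hA]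
  have hQs : (Q s).toReal = (Q (s ∩ A)).toReal + (Q (s \ A)).toReal := by
    rw [← ENNReal.toReal_add (fin Q _) (fin Q _), measure_inter_add_diff s hA]
  have hPA : (P A).toReal = (P (A ∩ s)).toReal + (P (A \ s)).toReal := by
    rw [← ENNReal.toReal_add (fin P _) (fin P _), measure_inter_add_diff A hs]
  have hQA : (Q A).toReal = (Q (A ∩ s)).toReal + (Q (A \ s)).toReal := by
    rw [← ENNReal.toReal_add (fin Q _) (fin Q _), measure_inter_add_diff A hs]
  have e1 : s ∩ A = A ∩ s := Set.inter_comm s A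
  have k1 : (Q (A \ s)).toReal ≤ (P (A \ s)).toReal :=
    ENNReal.toReal_le_toReal (fin Q _) (fin P _) |>.mpr
      (h₁ _ (hA.diff hs) Set.diff_subset)
  have k2 : (P (s \ A)).toReal ≤ (Q (s \ A)).toReal :=
    ENNReal.toReal_le_toReal (fin P _) (fin Q _) |>.mpr
      (h₂ _ (hs.diff hA) (fun x hx => hx.2))
  rw [hPs, hQs, hPA, hQA, e1]
  linarith

lemma pdf_mono {m₁ m₂ : ℝ} (σ : ℝ) (hσ : 0 < σ) {x : ℝ} (h : (x - m₁) ^ 2 ≤ (x - m₂) ^ 2) :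
    gaussianPDFReal m₂ (Real.toNNReal (σ ^ 2)) x ≤ gaussianPDFReal m₁ (Real.toNNReal (σ ^ 2)) x := by
  unfold gaussianPDFReal
  have hv : ((Real.toNNReal (σ ^ 2)) : ℝ) = σ ^ 2 := Real.coe_toNNReal _ (sq_nonneg σ)
  rw [hv]
  have h2 : (0:ℝ) < 2 * σ ^ 2 := by positivity
  gcongr

lemma gauss_set_mono {m₁ m₂ : ℝ} (σ : ℝ) (hσ : 0 < σ) {s : Set ℝ} (hs : MeasurableSet s)
    (h : ∀ x ∈ s, (x - m₁) ^ 2 ≤ (x - m₂) ^ 2) :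
    gaussianReal m₂ (Real.toNNReal (σ ^ 2)) s ≤ gaussianReal m₁ (Real.toNNReal (σ ^ 2)) s := by
  have hv : Real.toNNReal (σ ^ 2) ≠ 0 := by
    simp [Real.toNNReal_eq_zero, not_le, pow_pos hσ, hσ.ne']
  rw [gaussianReal_apply _ hv, gaussianReal_apply _ hv]
  refine setLIntegral_mono (measurable_gaussianPDF _ _) (fun x hx => ?_)
  exact ENNReal.ofReal_le_ofReal (pdf_mono σ hσ (h x hx))


lemma stdNormalCDF_neg (x : ℝ) : stdNormalCDF (-x) = 1 - stdNormalCDF x := by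
  unfold stdNormalCDF
  rw [stdNormal_neg, stdNormal_Ici, ENNReal.toReal_sub_of_le prob_le_one ENNReal.one_ne_top,
    ENNReal.toReal_one]

lemma stdNormalCDF_zero : stdNormalCDF 0 = 1 / 2 := by
  have h := stdNormalCDF_neg 0
  rw [neg_zero] at h
  linarith

lemma tvDist_comm (P Q : Measure ℝ) : tvDist P Q = tvDist Q P := by
  unfold tvDist
  congr 1
  ext s
  rw [abs_sub_comm]

lemma gaussian_tv_of_le (m₁ m₂ σ : ℝ) (hσ : 0 < σ) (h12 : m₁ ≤ m₂) :
    tvDist (gaussianReal m₁ (Real.toNNReal (σ ^ 2)))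
        (gaussianReal m₂ (Real.toNNReal (σ ^ 2))) =
      2 * stdNormalCDF ((m₂ - m₁) / (2 * σ)) - 1 := by
  set P := gaussianReal m₁ (Real.toNNReal (σ ^ 2)) with hP
  set Q := gaussianReal m₂ (Real.toNNReal (σ ^ 2)) with hQ
  set c := (m₁ + m₂) / 2 with hc
  set t := (m₂ - m₁) / (2 * σ) with ht
  set A := Set.Iic c with hA
  have hAmeas : MeasurableSet A := measurableSet_Iic
  -- density comparisons
  have h₁ : ∀ s, MeasurableSet s → s ⊆ A → Q s ≤ P s := by
    intro s hs hsub
    exact gauss_set_mono σ hσ hs (fun x hx => by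
      have : x ≤ c := hsub hx
      nlinarith)
  have h₂ : ∀ s, MeasurableSet s → s ⊆ Aᶜ → P s ≤ Q s := by
    intro s hs hsub
    exact gauss_set_mono σ hσ hs (fun x hx => by
      have : ¬ (x ≤ c) := hsub hx
      nlinarith [lt_of_not_ge this])
  set D := (P A).toReal - (Q A).toReal with hD
  have hcompl : (∀ (μ : Measure ℝ) [IsProbabilityMeasure μ],
      (μ Aᶜ).toReal = 1 - (μ A).toReal) := by
    intro μ _
    rw [prob_compl_eq_one_sub hAmeas, ENNReal.toReal_sub_of_le prob_le_one ENNReal.one_ne_top,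
      ENNReal.toReal_one]
  have bound : ∀ s : {s : Set ℝ // MeasurableSet s},
      |(P s).toReal - (Q s).toReal| ≤ D := by
    intro ⟨s, hs⟩
    rw [abs_sub_le_iff]
    constructor
    · exact tv_aux hAmeas h₁ h₂ hs
    · have := tv_aux (P := Q) (Q := P) hAmeas.compl
        (fun u hu husub => h₂ u hu husub)
        (fun u hu husub => h₁ u hu (by rwa [compl_compl] at husub)) hs
      calc (Q s).toReal - (P s).toReal ≤ (Q Aᶜ).toReal - (P Aᶜ).toReal := this
        _ = D := by rw [hcompl Q, hcompl P]; ring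
  have hattain : |(P A).toReal - (Q A).toReal| = D := by
    rw [hD, abs_of_nonneg]
    have := h₁ A hAmeas subset_rfl
    have := ENNReal.toReal_le_toReal (measure_ne_top Q A) (measure_ne_top P A) |>.mpr this
    linarith
  have htv : tvDist P Q = D := by
    unfold tvDist
    apply le_antisymm (ciSup_le bound)
    have hbdd : BddAbove (Set.range fun s : {s : Set ℝ // MeasurableSet s} =>
        |(P s).toReal - (Q s).toReal|) := ⟨D, by rintro _ ⟨s, rfl⟩; exact bound s⟩
    calc D = |(P A).toReal - (Q A).toReal| := hattain.symm
      _ ≤ _ := le_ciSup hbdd ⟨A, hAmeas⟩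
  rw [htv, hD]
  have hPA : (P A).toReal = stdNormalCDF t := by
    rw [hP, hA, gaussian_Iic m₁ σ hσ c]
    unfold stdNormalCDF
    congr 2
    rw [hc, ht]
    field_simp
    ring
  have hQA : (Q A).toReal = stdNormalCDF (-t) := by
    rw [hQ, hA, gaussian_Iic m₂ σ hσ c]
    unfold stdNormalCDF
    congr 2
    rw [hc, ht]
    field_simp
    ring
  rw [hPA, hQA, stdNormalCDF_neg]
  ring

lemma stdNormalCDF_bound {t : ℝ} (ht : 0 ≤ t) :
    stdNormalCDF t ≤ 1 / 2 + t / Real.sqrt (2 * Real.pi) := by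
  have hsplit : gaussianReal 0 1 (Set.Iic t)
      = gaussianReal 0 1 (Set.Iic 0) + gaussianReal 0 1 (Set.Ioc 0 t) := by
    rw [← measure_union (Set.Iic_disjoint_Ioc le_rfl) measurableSet_Ioc,
      Set.Iic_union_Ioc_eq_Iic ht]
  have hpdf : ∀ x, gaussianPDF 0 1 x ≤ ENNReal.ofReal (Real.sqrt (2 * Real.pi))⁻¹ := by
    intro x
    refine ENNReal.ofReal_le_ofReal ?_
    unfold gaussianPDFReal
    have h1 : ((1 : NNReal) : ℝ) = 1 := rfl
    rw [h1, mul_one]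
    calc (Real.sqrt (2 * Real.pi))⁻¹ * Real.exp (-(x - 0) ^ 2 / (2 * 1))
        ≤ (Real.sqrt (2 * Real.pi))⁻¹ * 1 := by
          gcongr
          exact Real.exp_le_one_iff.mpr (by nlinarith [sq_nonneg (x - 0)])
      _ = (Real.sqrt (2 * Real.pi))⁻¹ := mul_one _
  have hIoc : gaussianReal 0 1 (Set.Ioc 0 t)
      ≤ ENNReal.ofReal ((Real.sqrt (2 * Real.pi))⁻¹ * t) := by
    rw [gaussianReal_apply 0 one_ne_zero]
    calc ∫⁻ x in Set.Ioc 0 t, gaussianPDF 0 1 x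
        ≤ ∫⁻ _ in Set.Ioc 0 t, ENNReal.ofReal (Real.sqrt (2 * Real.pi))⁻¹ :=
          setLIntegral_mono measurable_const (fun x _ => hpdf x)
      _ = ENNReal.ofReal (Real.sqrt (2 * Real.pi))⁻¹ * volume (Set.Ioc 0 t) := by
          rw [setLIntegral_const]
      _ = ENNReal.ofReal ((Real.sqrt (2 * Real.pi))⁻¹ * t) := by
          rw [Real.volume_Ioc, sub_zero, ← ENNReal.ofReal_mul (by positivity)]
  have h0 : ((gaussianReal 0 1) (Set.Iic 0)).toReal = 1 / 2 := stdNormalCDF_zero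
  unfold stdNormalCDF
  rw [hsplit, ENNReal.toReal_add (measure_ne_top _ _) (measure_ne_top _ _), h0]
  have : ((gaussianReal 0 1) (Set.Ioc 0 t)).toReal ≤ (Real.sqrt (2 * Real.pi))⁻¹ * t := by
    have := ENNReal.toReal_le_toReal (measure_ne_top _ _) ENNReal.ofReal_ne_top |>.mpr hIoc
    rwa [ENNReal.toReal_ofReal (by positivity)] at this
  have heq : (Real.sqrt (2 * Real.pi))⁻¹ * t = t / Real.sqrt (2 * Real.pi) := by
    rw [div_eq_inv_mul]
  linarith [heq ▸ this]

theorem gaussian_tv_same_variance (m₁ m₂ σ : ℝ) (hσ : 0 < σ) :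
    tvDist (gaussianReal m₁ (Real.toNNReal (σ ^ 2)))
        (gaussianReal m₂ (Real.toNNReal (σ ^ 2))) =
      2 * stdNormalCDF (|m₁ - m₂| / (2 * σ)) - 1 ∧
    tvDist (gaussianReal m₁ (Real.toNNReal (σ ^ 2)))
        (gaussianReal m₂ (Real.toNNReal (σ ^ 2))) ≤
      |m₁ - m₂| / (σ * Real.sqrt (2 * Real.pi)) := by
  have heq : tvDist (gaussianReal m₁ (Real.toNNReal (σ ^ 2)))
      (gaussianReal m₂ (Real.toNNReal (σ ^ 2))) =
      2 * stdNormalCDF (|m₁ - m₂| / (2 * σ)) - 1 := by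
    rcases le_total m₁ m₂ with h | h
    · rw [abs_of_nonpos (by linarith), neg_sub]
      exact gaussian_tv_of_le m₁ m₂ σ hσ h
    · rw [abs_of_nonneg (by linarith), tvDist_comm]
      exact gaussian_tv_of_le m₂ m₁ σ hσ h
  refine ⟨heq, ?_⟩
  rw [heq]
  have ht : 0 ≤ |m₁ - m₂| / (2 * σ) := by positivity
  have hb := stdNormalCDF_bound ht
  have hπ : 0 < Real.sqrt (2 * Real.pi) := Real.sqrt_pos.mpr (by positivity)
  have : |m₁ - m₂| / (2 * σ) / Real.sqrt (2 * Real.pi)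
      = |m₁ - m₂| / (σ * Real.sqrt (2 * Real.pi)) / 2 := by
    rw [div_div, div_div]
    congr 1
    ring
  rw [this] at hb
  linarith
end
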